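/- Theorem 1 (property 2): Let k be the equal opportunity control. For every game (X, λ_w, p, G, v_q, v_u, ω), the set of k-controlled equilibria equals the set of non-discriminatory equilibria. -/

import Mathlib

/-!
Formalization of the Coate–Loury statistical discrimination model with
machine-learning (contractible) beliefs, following Zhu,
"The Impact of Equal Opportunity on Statistical Discrimination".
-/

open scoped BigOperators
open MeasureTheory

noncomputable section

attribute [local instance] Classical.propDecidable

/-- Group identities `I = {w, b}`. -/
inductive GrpI
  | w
  | b
deriving DecidableEq

instance : Fintype GrpI := ⟨{GrpI.w, GrpI.b}, fun x => by cases x <;> simp⟩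

/-- Classes `Y = {q, u}` (qualified / unqualified). -/
inductive Cls
  | q
  | u
deriving DecidableEq

instance : Fintype Cls := ⟨{Cls.q, Cls.u}, fun x => by cases x <;> simp⟩

/-- A game `(X, λ_w, p, G, v_q, v_u, ω)` of the Coate–Loury model.  The set of
other features is the finite product `X = X_1 × ⋯ × X_N`, encoded as the pi type
`(j : Fin N) → Xs j`.  The statistical model (Assumption 1) is encoded through a
nonempty subset `Ysub ⊆ {1, …, N}` together with the factorization
`p(x | i, y) = pY(x_𝒴 | y) · pC(x_{-𝒴} | i, x_𝒴)`.  The cost distribution is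
given by an everywhere positive density `g` with `∫ g = 1` and `∫ |c| g(c) dc < ∞`. -/
structure Game (N : ℕ) (Xs : Fin N → Type) [∀ j, Fintype (Xs j)]
    [∀ j, Nonempty (Xs j)] where
  lamw : ℝ
  lamw_pos : 0 < lamw
  lamw_lt_one : lamw < 1
  Ysub : Finset (Fin N)
  Ysub_nonempty : Ysub.Nonempty
  pY : ((j : Ysub) → Xs j.1) → Cls → ℝ
  pC : GrpI → ((j : Fin N) → Xs j) → ℝ
  pY_pos : ∀ xY y, 0 < pY xY y
  pC_pos : ∀ i x, 0 < pC i x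
  pY_sum : ∀ y, ∑ xY, pY xY y = 1
  pC_sum : ∀ (i : GrpI) (xY : (j : Ysub) → Xs j.1),
    ∑ x ∈ Finset.univ.filter
        (fun x : (j : Fin N) → Xs j => (fun j : Ysub => x j.1) = xY),
      pC i x = 1
  g : ℝ → ℝ
  g_pos : ∀ c, 0 < g c
  g_int : Integrable g
  g_norm : (∫ c, g c) = 1
  g_abs_int : Integrable fun c => |c| * g c
  vq : ℝ
  vu : ℝ
  om : ℝ
  vq_pos : 0 < vq
  vu_pos : 0 < vu
  om_pos : 0 < om

section Policies

variable {N : ℕ} {Xs : Fin N → Type}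

/-- A decision policy `d : I × X → [0,1]`. -/
def IsPolicy (d : GrpI → ((j : Fin N) → Xs j) → ℝ) : Prop :=
  ∀ i x, d i x ∈ Set.Icc (0 : ℝ) 1

/-- A decision policy when data is color-blind, `d_cb : X → [0,1]`. -/
def IsCbPolicy (dcb : ((j : Fin N) → Xs j) → ℝ) : Prop :=
  ∀ x, dcb x ∈ Set.Icc (0 : ℝ) 1

/-- `S ⊆ {1, …, N}` has the dependence property for the belief `f`:
`f` depends on `(i, x)` only up to `(i, x_S)`. -/
def DepProp {I : Type} (f : I → ((j : Fin N) → Xs j) → ℝ)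
    (S : Finset (Fin N)) : Prop :=
  ∀ (i : I) (x x' : (j : Fin N) → Xs j), (∀ j ∈ S, x j = x' j) → f i x = f i x'

/-- The minimal subset `Ŷ(f)` with the dependence property. -/
def minDep {I : Type} (f : I → ((j : Fin N) → Xs j) → ℝ) : Finset (Fin N) :=
  Finset.univ.filter fun j => ∀ S : Finset (Fin N), DepProp f S → j ∈ S

variable [∀ j, Fintype (Xs j)]

/-- Full-support probability distributions on `I × X` (the set `Δ°(I × X)`). -/
def FullSupp (μ : GrpI → ((j : Fin N) → Xs j) → ℝ) : Prop :=
  (∀ i x, 0 < μ i x) ∧ ∑ i, ∑ x, μ i x = 1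

/-- Beliefs valued in `(0, 1)`. -/
def OpenBelief (f : GrpI → ((j : Fin N) → Xs j) → ℝ) : Prop :=
  ∀ i x, f i x ∈ Set.Ioo (0 : ℝ) 1

/-- Acceptance rate of group `i`. -/
def AR (i : GrpI) (d μ : GrpI → ((j : Fin N) → Xs j) → ℝ) : ℝ :=
  (∑ x, d i x * μ i x) / ∑ x, μ i x

/-- True positive rate of group `i`. -/
def TP (i : GrpI) (d μ f : GrpI → ((j : Fin N) → Xs j) → ℝ) : ℝ :=
  (∑ x, d i x * μ i x * f i x) / ∑ x, μ i x * f i x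

/-- The equal opportunity control `k(X, μ, f)`. -/
def EOset (μ f : GrpI → ((j : Fin N) → Xs j) → ℝ) :
    Set (GrpI → ((j : Fin N) → Xs j) → ℝ) :=
  {d | IsPolicy d ∧ TP GrpI.w d μ f = TP GrpI.b d μ f}

/-- The color-blind control: all color-blind decision policies. -/
def CBset : Set (GrpI → ((j : Fin N) → Xs j) → ℝ) :=
  {d | IsPolicy d ∧ ∀ x, d GrpI.w x = d GrpI.b x}

/-- The no proxies control: policies depending on `(i,x)` only through `x_{Ŷ(f)}`. -/
def NoProxies (_μ f : GrpI → ((j : Fin N) → Xs j) → ℝ) :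
    Set (GrpI → ((j : Fin N) → Xs j) → ℝ) :=
  {d | IsPolicy d ∧
    ∀ i i' x x', (∀ j ∈ minDep f, x j = x' j) → d i x = d i' x'}

/-- `ℓ²` distance between decision policies. -/
def polDist (d d' : GrpI → ((j : Fin N) → Xs j) → ℝ) : ℝ :=
  Real.sqrt (∑ i, ∑ x, (d i x - d' i x) ^ 2)

/-- `ℓ²` distance between pairs `(μ, f)`. -/
def pairDist (μ f μ' f' : GrpI → ((j : Fin N) → Xs j) → ℝ) : ℝ :=
  Real.sqrt ((∑ i, ∑ x, (μ i x - μ' i x) ^ 2) + ∑ i, ∑ x, (f i x - f' i x) ^ 2)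

/-- `ℓ²` distance between strategy profiles `(c̄, d)`. -/
def profDist (c : GrpI → ℝ) (d : GrpI → ((j : Fin N) → Xs j) → ℝ)
    (c' : GrpI → ℝ) (d' : GrpI → ((j : Fin N) → Xs j) → ℝ) : ℝ :=
  Real.sqrt ((∑ i, (c i - c' i) ^ 2) + ∑ i, ∑ x, (d i x - d' i x) ^ 2)

end Policies

/-- Upper hemicontinuity of a correspondence on a set. -/
def UpperHemicontinuousOnCorr {α β : Type*} [TopologicalSpace α] [TopologicalSpace β]
    (F : α → Set β) (S : Set α) : Prop :=
  ∀ a ∈ S, ∀ V : Set β, IsOpen V → F a ⊆ V → ∀ᶠ a' in nhdsWithin a S, F a' ⊆ V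

/-- Lower hemicontinuity of a correspondence on a set. -/
def LowerHemicontinuousOnCorr {α β : Type*} [TopologicalSpace α] [TopologicalSpace β]
    (F : α → Set β) (S : Set α) : Prop :=
  ∀ a ∈ S, ∀ V : Set β, IsOpen V → (F a ∩ V).Nonempty →
    ∀ᶠ a' in nhdsWithin a S, (F a' ∩ V).Nonempty

namespace Game

variable {N : ℕ} {Xs : Fin N → Type} [∀ j, Fintype (Xs j)] [∀ j, Nonempty (Xs j)]
variable (Γ : Game N Xs)

/-- Projection `x ↦ x_𝒴`. -/
def proj (x : (j : Fin N) → Xs j) : (j : Γ.Ysub) → Xs j.1 := fun j => x j.1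

/-- `p(x | i, y) = p(x_𝒴 | y) · p(x_{-𝒴} | i, x_𝒴)`. -/
def p (i : GrpI) (x : (j : Fin N) → Xs j) (y : Cls) : ℝ :=
  Γ.pY (Γ.proj x) y * Γ.pC i x

/-- Group probabilities `λ_w`, `λ_b = 1 - λ_w`. -/
def lam : GrpI → ℝ := fun i =>
  match i with
  | GrpI.w => Γ.lamw
  | GrpI.b => 1 - Γ.lamw

/-- The CDF `G` of the cost distribution. -/
def G (c : ℝ) : ℝ := ∫ t in Set.Iic c, Γ.g t

/-- The likelihood function `l(x) = p(x_𝒴 | q) / p(x_𝒴 | u)`. -/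
def lhd (x : (j : Fin N) → Xs j) : ℝ :=
  Γ.pY (Γ.proj x) Cls.q / Γ.pY (Γ.proj x) Cls.u

/-- The likelihood function on `X_𝒴`. -/
def lhdY (xY : (j : Γ.Ysub) → Xs j.1) : ℝ := Γ.pY xY Cls.q / Γ.pY xY Cls.u

/-- The set of likelihood values `{l_1 < … < l_n}`. -/
def LVset : Set ℝ := Set.range Γ.lhd

/-- The assumption that `1` is not a likelihood value
(equivalently, `WW` is single-peaked). -/
def OneNotLV : Prop := (1 : ℝ) ∉ Γ.LVset

/-- The largest likelihood value `l_n`. -/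
def lmax : ℝ := sSup Γ.LVset

/-- `⌈ℓ⌉`: the smallest likelihood value `≥ ℓ`. -/
def lceil (ℓ : ℝ) : ℝ := sInf {v | v ∈ Γ.LVset ∧ ℓ ≤ v}

/-- `⌈ℓ⌉⁻`: the next smallest likelihood value below `⌈ℓ⌉` (or `l_0 = 0`). -/
def lceilm (ℓ : ℝ) : ℝ := sSup (insert 0 {v | v ∈ Γ.LVset ∧ v < Γ.lceil ℓ})

/-- The smallest likelihood value `> ℓ`. -/
def lnext (ℓ : ℝ) : ℝ := sInf {v | v ∈ Γ.LVset ∧ ℓ < v}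

/-- The true distribution of features `μ_RE` given cost thresholds `c̄`. -/
def muRE (c : GrpI → ℝ) (i : GrpI) (x : (j : Fin N) → Xs j) : ℝ :=
  Γ.lam i * (Γ.G (c i) * Γ.p i x Cls.q + (1 - Γ.G (c i)) * Γ.p i x Cls.u)

/-- The true conditional probability (calibrated belief) `f_RE` given `c̄`. -/
def fRE (c : GrpI → ℝ) (i : GrpI) (x : (j : Fin N) → Xs j) : ℝ :=
  Γ.G (c i) * Γ.p i x Cls.q /
    (Γ.G (c i) * Γ.p i x Cls.q + (1 - Γ.G (c i)) * Γ.p i x Cls.u)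

/-- Utility `U_i(c̄(i), d(i))` of the representative `i`-applicant. -/
def Uapp (i : GrpI) (ci : ℝ) (di : ((j : Fin N) → Xs j) → ℝ) : ℝ :=
  Γ.om * ∑ x, (Γ.G ci * Γ.p i x Cls.q + (1 - Γ.G ci) * Γ.p i x Cls.u) * di x -
    ∫ t in Set.Iic ci, t * Γ.g t

/-- Firm utility `U_F(d, μ, f)`. -/
def UF (d μ f : GrpI → ((j : Fin N) → Xs j) → ℝ) : ℝ :=
  ∑ i, ∑ x, d i x * μ i x * (f i x * Γ.vq - (1 - f i x) * Γ.vu)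

/-- The color-blind true distribution of features `μ_cb,RE`. -/
def mucbRE (c : GrpI → ℝ) (x : (j : Fin N) → Xs j) : ℝ :=
  Γ.muRE c GrpI.w x + Γ.muRE c GrpI.b x

/-- The color-blind true conditional probability `f_cb,RE`. -/
def fcbRE (c : GrpI → ℝ) (x : (j : Fin N) → Xs j) : ℝ :=
  (Γ.muRE c GrpI.w x * Γ.fRE c GrpI.w x + Γ.muRE c GrpI.b x * Γ.fRE c GrpI.b x) /
    Γ.mucbRE c x

/-- Firm utility when data is color-blind. -/
def UFcb (dcb μcb fcb : ((j : Fin N) → Xs j) → ℝ) : ℝ :=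
  ∑ x, dcb x * μcb x * (fcb x * Γ.vq - (1 - fcb x) * Γ.vu)

/-- `d(i | l_m)`: conditional acceptance probability at likelihood value `lv`. -/
def dcond (i : GrpI) (di : ((j : Fin N) → Xs j) → ℝ) (lv : ℝ) : ℝ :=
  (∑ x ∈ Finset.univ.filter (fun x => Γ.lhd x = lv), Γ.p i x Cls.q * di x) /
    ∑ x ∈ Finset.univ.filter (fun x => Γ.lhd x = lv), Γ.p i x Cls.q

/-- The within-group policy `d(i)` is associated with the likelihood mixture `ℓ`. -/
def AssociatedWith (i : GrpI) (di : ((j : Fin N) → Xs j) → ℝ) (ℓ : ℝ) : Prop :=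
  0 ≤ ℓ ∧ ℓ ≤ Γ.lmax ∧
    ∀ lv ∈ Γ.LVset,
      (Γ.lceil ℓ < lv → Γ.dcond i di lv = 1) ∧
      (lv = Γ.lceil ℓ →
        Γ.dcond i di lv = (Γ.lceil ℓ - ℓ) / (Γ.lceil ℓ - Γ.lceilm ℓ)) ∧
      (lv < Γ.lceil ℓ → Γ.dcond i di lv = 0)

/-- A decision policy is fair if both within-group policies are associated with
the same likelihood mixture. -/
def Fair (d : GrpI → ((j : Fin N) → Xs j) → ℝ) : Prop :=
  ∃ ℓ, Γ.AssociatedWith GrpI.w (d GrpI.w) ℓ ∧ Γ.AssociatedWith GrpI.b (d GrpI.b) ℓ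

/-- `WW(l_m) = ω ∑_{x_𝒴 : l(x_𝒴) > l_m} (p(x_𝒴|q) - p(x_𝒴|u))`. -/
def WWval (t : ℝ) : ℝ :=
  Γ.om * ∑ xY ∈ Finset.univ.filter (fun xY => t < Γ.lhdY xY),
    (Γ.pY xY Cls.q - Γ.pY xY Cls.u)

/-- The piecewise-linear function `WW` interpolating the points `(l_m, WW(l_m))`. -/
def WW (ℓ : ℝ) : ℝ :=
  if Γ.lceil ℓ = Γ.lceilm ℓ then Γ.WWval (Γ.lceil ℓ)
  else
    (Γ.WWval (Γ.lceilm ℓ) * (Γ.lceil ℓ - ℓ) +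
        Γ.WWval (Γ.lceil ℓ) * (ℓ - Γ.lceilm ℓ)) /
      (Γ.lceil ℓ - Γ.lceilm ℓ)

/-- `EĒ(l_m)`: the unique cost with `G(EĒ(l_m)) = 1 / ((v_q/v_u) l_m + 1)`. -/
def EEbar (lv : ℝ) : ℝ := sInf {cc | 1 / (Γ.vq / Γ.vu * lv + 1) ≤ Γ.G cc}

/-- The correspondence `EE : [0, l_n] ⇒ ℝ`. -/
def EE (ℓ : ℝ) : Set ℝ :=
  if ℓ = 0 then Set.Ici (Γ.EEbar (Γ.lceil 0))
  else if ℓ = Γ.lmax then Set.Iic (Γ.EEbar Γ.lmax)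
  else if ℓ ∈ Γ.LVset then Set.Icc (Γ.EEbar (Γ.lnext ℓ)) (Γ.EEbar ℓ)
  else {Γ.EEbar (Γ.lceil ℓ)}

/-- Each representative applicant's cost threshold is a best response to `d`. -/
def BestResponds (c : GrpI → ℝ) (d : GrpI → ((j : Fin N) → Xs j) → ℝ) : Prop :=
  ∀ (i : GrpI) (c' : ℝ), Γ.Uapp i c' (d i) ≤ Γ.Uapp i (c i) (d i)

/-- An (un-controlled) equilibrium. -/
def IsEquilibrium (c : GrpI → ℝ) (d : GrpI → ((j : Fin N) → Xs j) → ℝ) : Prop :=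
  IsPolicy d ∧ Γ.BestResponds c d ∧
    ∀ d', IsPolicy d' →
      Γ.UF d' (Γ.muRE c) (Γ.fRE c) ≤ Γ.UF d (Γ.muRE c) (Γ.fRE c)

/-- A `k`-controlled equilibrium, for the control `(μ, f) ↦ K μ f`. -/
def IsControlledEq
    (K : (GrpI → ((j : Fin N) → Xs j) → ℝ) → (GrpI → ((j : Fin N) → Xs j) → ℝ) →
      Set (GrpI → ((j : Fin N) → Xs j) → ℝ))
    (c : GrpI → ℝ) (d : GrpI → ((j : Fin N) → Xs j) → ℝ) : Prop :=
  d ∈ K (Γ.muRE c) (Γ.fRE c) ∧ Γ.BestResponds c d ∧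
    ∀ d' ∈ K (Γ.muRE c) (Γ.fRE c),
      Γ.UF d' (Γ.muRE c) (Γ.fRE c) ≤ Γ.UF d (Γ.muRE c) (Γ.fRE c)

/-- `𝒮_k(μ, f)`: firm-optimal policies under the control `K` at `(μ, f)`. -/
def Smax
    (K : (GrpI → ((j : Fin N) → Xs j) → ℝ) → (GrpI → ((j : Fin N) → Xs j) → ℝ) →
      Set (GrpI → ((j : Fin N) → Xs j) → ℝ))
    (μ f : GrpI → ((j : Fin N) → Xs j) → ℝ) :
    Set (GrpI → ((j : Fin N) → Xs j) → ℝ) :=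
  {d | d ∈ K μ f ∧ ∀ d' ∈ K μ f, Γ.UF d' μ f ≤ Γ.UF d μ f}

/-- A `k`-controlled `ε`-equilibrium. -/
def IsCtrlEpsEq
    (K : (GrpI → ((j : Fin N) → Xs j) → ℝ) → (GrpI → ((j : Fin N) → Xs j) → ℝ) →
      Set (GrpI → ((j : Fin N) → Xs j) → ℝ))
    (ε : ℝ) (c : GrpI → ℝ) (d : GrpI → ((j : Fin N) → Xs j) → ℝ) : Prop :=
  ∃ μ f, FullSupp μ ∧ OpenBelief f ∧
    pairDist μ f (Γ.muRE c) (Γ.fRE c) ≤ ε ∧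
    Γ.BestResponds c d ∧ d ∈ K μ f ∧ ∀ d' ∈ K μ f, Γ.UF d' μ f ≤ Γ.UF d μ f

/-- Best responses of applicants to a color-blind policy. -/
def BestRespondsCb (c : GrpI → ℝ) (dcb : ((j : Fin N) → Xs j) → ℝ) : Prop :=
  ∀ (i : GrpI) (c' : ℝ), Γ.Uapp i c' dcb ≤ Γ.Uapp i (c i) dcb

/-- An equilibrium when data is color-blind (unrestricted control). -/
def IsCbEquilibrium (c : GrpI → ℝ) (dcb : ((j : Fin N) → Xs j) → ℝ) : Prop :=
  IsCbPolicy dcb ∧ Γ.BestRespondsCb c dcb ∧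
    ∀ dcb', IsCbPolicy dcb' →
      Γ.UFcb dcb' (Γ.mucbRE c) (Γ.fcbRE c) ≤ Γ.UFcb dcb (Γ.mucbRE c) (Γ.fcbRE c)

/-- A `k_cb`-controlled equilibrium when data is color-blind. -/
def IsCbControlledEq (K : Set (((j : Fin N) → Xs j) → ℝ)) (c : GrpI → ℝ)
    (dcb : ((j : Fin N) → Xs j) → ℝ) : Prop :=
  dcb ∈ K ∧ Γ.BestRespondsCb c dcb ∧
    ∀ dcb' ∈ K,
      Γ.UFcb dcb' (Γ.mucbRE c) (Γ.fcbRE c) ≤ Γ.UFcb dcb (Γ.mucbRE c) (Γ.fcbRE c)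

end Game

/-- A control when data is color-blind: for each `X` and each
`(μ_cb, f_cb) ∈ Δ°(X) × (0,1)^X` it specifies a nonempty compact set of
color-blind decision policies. -/
structure CbControl : Type 1 where
  sets : ∀ (N : ℕ) (Xs : Fin N → Type) [∀ j, Fintype (Xs j)] [∀ j, Nonempty (Xs j)],
    (((j : Fin N) → Xs j) → ℝ) → (((j : Fin N) → Xs j) → ℝ) →
      Set (((j : Fin N) → Xs j) → ℝ)
  nonempty : ∀ (N : ℕ) (Xs : Fin N → Type) [∀ j, Fintype (Xs j)]
    [∀ j, Nonempty (Xs j)] (μ f : ((j : Fin N) → Xs j) → ℝ),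
    (∀ x, 0 < μ x) → (∑ x, μ x = 1) → (∀ x, f x ∈ Set.Ioo (0 : ℝ) 1) →
    (sets N Xs μ f).Nonempty
  compact : ∀ (N : ℕ) (Xs : Fin N → Type) [∀ j, Fintype (Xs j)]
    [∀ j, Nonempty (Xs j)] (μ f : ((j : Fin N) → Xs j) → ℝ),
    (∀ x, 0 < μ x) → (∑ x, μ x = 1) → (∀ x, f x ∈ Set.Ioo (0 : ℝ) 1) →
    IsCompact (sets N Xs μ f)
  mem_policy : ∀ (N : ℕ) (Xs : Fin N → Type) [∀ j, Fintype (Xs j)]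
    [∀ j, Nonempty (Xs j)] (μ f : ((j : Fin N) → Xs j) → ℝ),
    (∀ x, 0 < μ x) → (∑ x, μ x = 1) → (∀ x, f x ∈ Set.Ioo (0 : ℝ) 1) →
    sets N Xs μ f ⊆ {dcb | IsCbPolicy dcb}

/-!
Both the firm's payoff and the true positive rates depend on a policy only through the
qualified mass `ν_i(l)` it accepts at each likelihood value `l`, and `ν_i` ranges over a box
`∏ₗ [0, m(l)]` that is the same for both groups; an applicant's best response is the cost
threshold `ω ∑ₗ (1 - 1/l) ν_i(l)`. Within a group the firm maximises `∑ₗ h(l) ν_i(l)` with `h`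
strictly increasing. Under equal opportunity only the total `∑ₗ ν_i(l)` is tied across groups,
so each optimal `ν_i` fills the levels from the top and is determined by its total: `ν_w = ν_b`,
hence equal thresholds, and then the firm's unconstrained optimum, a common threshold rule, is
itself an equal opportunity policy. Conversely, in a non-discriminatory equilibrium both groups
accept all mass above the firm's indifference level and none below; at that level the equal
thresholds force equal mass, as its weight `1 - 1/l` vanishes only at `l = 1`, which is not a
likelihood value. So again `ν_w = ν_b`, and the true positive rates agree.
-/

namespace Finset

variable {ι : Type*} {s : Finset ι} {w ν m : ι → ℝ}

theorem sum_mul_update_of_mem [DecidableEq ι] {x : ι} (hx : x ∈ s) (a : ℝ) :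
    ∑ y ∈ s, w y * Function.update ν x a y = ∑ y ∈ s, w y * ν y + w x * (a - ν x) := by
  rw [← add_sum_erase s _ hx, ← add_sum_erase s _ hx, Function.update_self,
    sum_congr rfl fun y hy => by rw [Function.update_of_ne (ne_of_mem_erase hy)]]
  ring

theorem forall_update_mem_Icc [DecidableEq ι] (hν : ∀ y ∈ s, ν y ∈ Set.Icc 0 (m y))
    {x : ι} {a : ℝ} (ha : a ∈ Set.Icc 0 (m x)) :
    ∀ y ∈ s, Function.update ν x a y ∈ Set.Icc 0 (m y) := by
  intro y hy
  by_cases hyx : y = x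
  · subst hyx; simpa using ha
  · simpa [hyx] using hν y hy

theorem sum_mul_le_sum_mul_ite (hν : ∀ y ∈ s, ν y ∈ Set.Icc 0 (m y)) :
    ∑ y ∈ s, w y * ν y ≤ ∑ y ∈ s, w y * if 0 ≤ w y then m y else 0 := by
  refine sum_le_sum fun y hy => ?_
  obtain ⟨h0, hm⟩ := hν y hy
  split_ifs with hwy
  · exact mul_le_mul_of_nonneg_left hm hwy
  · nlinarith

theorem eq_endpoint_of_forall_sum_mul_le (hν : ∀ y ∈ s, ν y ∈ Set.Icc 0 (m y))
    (hopt : ∀ ν' : ι → ℝ, (∀ y ∈ s, ν' y ∈ Set.Icc 0 (m y)) →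
      ∑ y ∈ s, w y * ν' y ≤ ∑ y ∈ s, w y * ν y)
    {x : ι} (hx : x ∈ s) : (0 < w x → ν x = m x) ∧ (w x < 0 → ν x = 0) := by
  classical
  have hgain : ∀ a ∈ Set.Icc 0 (m x), w x * (a - ν x) ≤ 0 := fun a ha => by
    have := hopt _ (forall_update_mem_Icc hν ha)
    rw [sum_mul_update_of_mem hx] at this
    linarith
  obtain ⟨h0, hm⟩ := hν x hx
  refine ⟨fun hpos => ?_, fun hneg => ?_⟩
  · nlinarith [hgain (m x) ⟨h0.trans hm, le_rfl⟩]
  · nlinarith [hgain 0 ⟨le_rfl, h0.trans hm⟩]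

def TopFilled [LT ι] (s : Finset ι) (m ν : ι → ℝ) : Prop :=
  ∀ x ∈ s, ∀ y ∈ s, x < y → 0 < ν x → ν y = m y

variable [LinearOrder ι]

theorem topFilled_of_forall_sum_mul_le (hw : StrictMonoOn w s)
    (hν : ∀ y ∈ s, ν y ∈ Set.Icc 0 (m y))
    (hopt : ∀ ν' : ι → ℝ, (∀ y ∈ s, ν' y ∈ Set.Icc 0 (m y)) →
      ∑ y ∈ s, ν' y = ∑ y ∈ s, ν y → ∑ y ∈ s, w y * ν' y ≤ ∑ y ∈ s, w y * ν y) :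
    TopFilled s m ν := by
  classical
  intro x hx y hy hxy hpos
  by_contra hne
  have hlt : ν y < m y := lt_of_le_of_ne (hν y hy).2 hne
  set ε := min (ν x) (m y - ν y)
  have hε : 0 < ε := lt_min hpos (sub_pos.2 hlt)
  set ν' := Function.update (Function.update ν x (ν x - ε)) y (ν y + ε)
  have hyx : y ≠ x := hxy.ne'
  have hmem : ∀ z ∈ s, ν' z ∈ Set.Icc 0 (m z) :=
    forall_update_mem_Icc
      (forall_update_mem_Icc hν ⟨by linarith [min_le_left (ν x) (m y - ν y)],
        by linarith [(hν x hx).2]⟩)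
      ⟨by linarith [(hν y hy).1], by linarith [min_le_right (ν x) (m y - ν y)]⟩
  have hsum : ∀ k : ι → ℝ, ∑ z ∈ s, k z * ν' z
      = ∑ z ∈ s, k z * ν z + ε * (k y - k x) := fun k => by
    rw [sum_mul_update_of_mem hy, sum_mul_update_of_mem hx, Function.update_of_ne hyx]
    ring
  have := hopt ν' hmem (by simpa using hsum 1)
  rw [hsum w] at this
  nlinarith [hw hx hy hxy]

theorem le_of_topFilled_of_lt {a b : ι → ℝ}
    (ha : ∀ y ∈ s, a y ∈ Set.Icc 0 (m y)) (hb : ∀ y ∈ s, b y ∈ Set.Icc 0 (m y))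
    (hta : TopFilled s m a) (htb : TopFilled s m b) {x : ι} (hx : x ∈ s) (hlt : a x < b x) :
    ∀ y ∈ s, a y ≤ b y := by
  intro y hy
  rcases lt_trichotomy y x with hyx | rfl | hxy
  · by_contra! hba
    have := hta y hy x hx hyx ((hb y hy).1.trans_lt hba)
    linarith [(hb x hx).2]
  · exact hlt.le
  · rw [htb x hx y hy hxy ((ha x hx).1.trans_lt hlt)]
    exact (ha y hy).2

theorem eqOn_of_topFilled {a b : ι → ℝ}
    (ha : ∀ y ∈ s, a y ∈ Set.Icc 0 (m y)) (hb : ∀ y ∈ s, b y ∈ Set.Icc 0 (m y))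
    (hta : TopFilled s m a) (htb : TopFilled s m b) (hsum : ∑ y ∈ s, a y = ∑ y ∈ s, b y) :
    ∀ x ∈ s, a x = b x := by
  intro x hx
  by_contra hne
  rcases lt_or_gt_of_ne hne with hlt | hlt
  · exact hsum.not_lt (sum_lt_sum (le_of_topFilled_of_lt ha hb hta htb hx hlt) ⟨x, hx, hlt⟩)
  · exact hsum.not_gt (sum_lt_sum (le_of_topFilled_of_lt hb ha htb hta hx hlt) ⟨x, hx, hlt⟩)

end Finset

theorem setIntegral_Iic_lt_of_sign_change {f : ℝ → ℝ} {B c : ℝ} (hf : Integrable f)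
    (hpos : ∀ t < B, 0 < f t) (hneg : ∀ t, B < t → f t < 0) (hc : c ≠ B) :
    ∫ t in Set.Iic c, f t < ∫ t in Set.Iic B, f t := by
  have hsub := intervalIntegral.integral_Iic_sub_Iic (f := f) (μ := volume) (a := c) (b := B)
    hf.integrableOn hf.integrableOn
  rcases hc.lt_or_gt with h | h
  · have := intervalIntegral.intervalIntegral_pos_of_pos_on hf.intervalIntegrable
      (fun t ht => hpos t ht.2) h
    linarith
  · have := intervalIntegral.intervalIntegral_pos_of_pos_on (f := fun t => -f t)
      hf.neg.intervalIntegrable (fun t ht => neg_pos.2 (hneg t ht.1)) h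
    rw [intervalIntegral.integral_neg, intervalIntegral.integral_symm] at this
    linarith

namespace Game

open Finset

variable {N : ℕ} {Xs : Fin N → Type} [∀ j, Fintype (Xs j)] [∀ j, Nonempty (Xs j)]
variable (Γ : Game N Xs)

theorem p_pos (i : GrpI) (x : (j : Fin N) → Xs j) (y : Cls) : 0 < Γ.p i x y :=
  mul_pos (Γ.pY_pos _ _) (Γ.pC_pos _ _)

theorem lhd_pos (x : (j : Fin N) → Xs j) : 0 < Γ.lhd x :=
  div_pos (Γ.pY_pos _ _) (Γ.pY_pos _ _)

theorem lam_pos : ∀ i, 0 < Γ.lam i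
  | .w => Γ.lamw_pos
  | .b => sub_pos.2 Γ.lamw_lt_one

theorem p_u_eq (i : GrpI) (x : (j : Fin N) → Xs j) :
    Γ.p i x Cls.u = (Γ.lhd x)⁻¹ * Γ.p i x Cls.q := by
  have := (Γ.pY_pos (Γ.proj x) Cls.q).ne'
  simp only [p, lhd]
  field_simp

theorem sum_mul_pC (i : GrpI) (F : ((j : Γ.Ysub) → Xs j.1) → ℝ) :
    ∑ x, F (Γ.proj x) * Γ.pC i x = ∑ xY, F xY := by
  rw [← sum_fiberwise_of_maps_to (t := univ) (g := Γ.proj) fun _ _ => mem_univ _]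
  refine sum_congr rfl fun xY _ => ?_
  rw [sum_congr rfl fun x hx => by rw [(mem_filter.1 hx).2], ← mul_sum]
  exact (congrArg _ (Γ.pC_sum i xY)).trans (mul_one _)

theorem sum_p (i : GrpI) (y : Cls) : ∑ x, Γ.p i x y = 1 := by
  simpa [p, Γ.pY_sum y] using Γ.sum_mul_pC i (fun xY => Γ.pY xY y)

def levels : Finset ℝ := univ.image Γ.lhd

theorem levels_subset_Ioi : (Γ.levels : Set ℝ) ⊆ Set.Ioi 0 := fun lv hlv => by
  obtain ⟨x, -, rfl⟩ := mem_image.1 hlv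
  exact Γ.lhd_pos x

def levelMass (lv : ℝ) : ℝ := ∑ xY with Γ.lhdY xY = lv, Γ.pY xY Cls.q

theorem sum_p_q_of_lhd_eq (i : GrpI) (lv : ℝ) :
    ∑ x with Γ.lhd x = lv, Γ.p i x Cls.q = Γ.levelMass lv := by
  rw [levelMass, sum_filter, sum_filter, ← Γ.sum_mul_pC i]
  exact sum_congr rfl fun x _ => by split_ifs <;> simp_all [p, lhd, lhdY]

theorem levelMass_pos {lv : ℝ} (hlv : lv ∈ Γ.levels) : 0 < Γ.levelMass lv := by
  obtain ⟨x, -, rfl⟩ := mem_image.1 hlv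
  rw [← Γ.sum_p_q_of_lhd_eq GrpI.w]
  exact sum_pos (fun x _ => Γ.p_pos _ _ _) ⟨x, by simp⟩

def acceptedMass (i : GrpI) (di : ((j : Fin N) → Xs j) → ℝ) (lv : ℝ) : ℝ :=
  ∑ x with Γ.lhd x = lv, di x * Γ.p i x Cls.q

theorem sum_mul_eq_sum_levels (i : GrpI) (di : ((j : Fin N) → Xs j) → ℝ) (φ : ℝ → ℝ) :
    ∑ x, φ (Γ.lhd x) * (di x * Γ.p i x Cls.q)
      = ∑ lv ∈ Γ.levels, φ lv * Γ.acceptedMass i di lv := by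
  rw [← sum_fiberwise_of_maps_to (t := Γ.levels) (g := Γ.lhd)
    fun x _ => mem_image_of_mem _ (mem_univ x)]
  refine sum_congr rfl fun lv _ => ?_
  rw [acceptedMass, mul_sum]
  exact sum_congr rfl fun x hx => by rw [(mem_filter.1 hx).2]

theorem acceptedMass_mem_Icc {i : GrpI} {di : ((j : Fin N) → Xs j) → ℝ}
    (hdi : ∀ x, di x ∈ Set.Icc 0 1) (lv : ℝ) :
    Γ.acceptedMass i di lv ∈ Set.Icc 0 (Γ.levelMass lv) := by
  rw [← Γ.sum_p_q_of_lhd_eq i]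
  have hp := Γ.p_pos i
  exact ⟨sum_nonneg fun x _ => mul_nonneg (hdi x).1 (hp x _).le,
    sum_le_sum fun x _ => mul_le_of_le_one_left (hp x _).le (hdi x).2⟩

def levelPolicy (ν : ℝ → ℝ) (x : (j : Fin N) → Xs j) : ℝ :=
  ν (Γ.lhd x) / Γ.levelMass (Γ.lhd x)

theorem levelPolicy_mem_Icc {ν : ℝ → ℝ}
    (hν : ∀ lv ∈ Γ.levels, ν lv ∈ Set.Icc 0 (Γ.levelMass lv)) (x : (j : Fin N) → Xs j) :
    Γ.levelPolicy ν x ∈ Set.Icc 0 1 := by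
  have hlv : Γ.lhd x ∈ Γ.levels := mem_image_of_mem _ (mem_univ x)
  obtain ⟨h0, hm⟩ := hν _ hlv
  exact ⟨div_nonneg h0 (Γ.levelMass_pos hlv).le, div_le_one_of_le₀ hm (Γ.levelMass_pos hlv).le⟩

theorem acceptedMass_levelPolicy (i : GrpI) (ν : ℝ → ℝ) {lv : ℝ} (hlv : lv ∈ Γ.levels) :
    Γ.acceptedMass i (Γ.levelPolicy ν) lv = ν lv := by
  rw [acceptedMass, sum_congr rfl fun x hx => by rw [levelPolicy, (mem_filter.1 hx).2],
    ← mul_sum, Γ.sum_p_q_of_lhd_eq, div_mul_cancel₀ _ (Γ.levelMass_pos hlv).ne']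

theorem G_strictMono : StrictMono Γ.G := fun a b hab => by
  have := intervalIntegral.intervalIntegral_pos_of_pos_on Γ.g_int.intervalIntegrable
    (fun t _ => Γ.g_pos t) hab
  rw [← intervalIntegral.integral_Iic_sub_Iic Γ.g_int.integrableOn Γ.g_int.integrableOn] at this
  exact sub_pos.1 this

theorem G_pos (c : ℝ) : 0 < Γ.G c :=
  (setIntegral_nonneg measurableSet_Iic fun t _ => (Γ.g_pos t).le).trans_lt
    (Γ.G_strictMono (sub_one_lt c))

theorem G_lt_one (c : ℝ) : Γ.G c < 1 :=
  (Γ.G_strictMono (lt_add_one c)).trans_le <| Γ.g_norm ▸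
    setIntegral_le_integral Γ.g_int (ae_of_all _ fun t => (Γ.g_pos t).le)

def incentive (i : GrpI) (di : ((j : Fin N) → Xs j) → ℝ) : ℝ :=
  Γ.om * ∑ x, (Γ.p i x Cls.q - Γ.p i x Cls.u) * di x

theorem integrable_mul_g : Integrable fun t => t * Γ.g t :=
  Γ.g_abs_int.mono (aestronglyMeasurable_id.mul Γ.g_int.aestronglyMeasurable)
    (ae_of_all _ fun t => by simp [abs_of_pos (Γ.g_pos t)])

theorem Uapp_eq (i : GrpI) (c : ℝ) (di : ((j : Fin N) → Xs j) → ℝ) :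
    Γ.Uapp i c di = (∫ t in Set.Iic c, (Γ.incentive i di - t) * Γ.g t)
      + Γ.om * ∑ x, Γ.p i x Cls.u * di x := by
  simp only [sub_mul]
  rw [integral_sub (Γ.g_int.const_mul _).integrableOn Γ.integrable_mul_g.integrableOn,
    integral_const_mul, Uapp, incentive, ← G]
  simp only [add_mul, sub_mul, one_mul, sum_add_distrib, sum_sub_distrib, ← mul_sum, mul_assoc]
  ring

theorem eq_incentive_of_bestResponds {c : GrpI → ℝ} {d : GrpI → ((j : Fin N) → Xs j) → ℝ}
    (hbr : Γ.BestResponds c d) (i : GrpI) : c i = Γ.incentive i (d i) := by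
  by_contra hne
  have := hbr i (Γ.incentive i (d i))
  rw [Γ.Uapp_eq, Γ.Uapp_eq] at this
  have := setIntegral_Iic_lt_of_sign_change (Γ.g_int.const_mul _ |>.sub Γ.integrable_mul_g
    |>.congr (ae_of_all _ fun t => (sub_mul _ _ _).symm))
    (fun t ht => mul_pos (sub_pos.2 ht) (Γ.g_pos t))
    (fun t ht => mul_neg_of_neg_of_pos (sub_neg.2 ht) (Γ.g_pos t)) hne
  linarith

theorem incentive_eq_sum_levels (i : GrpI) (di : ((j : Fin N) → Xs j) → ℝ) :
    Γ.incentive i di = Γ.om * ∑ lv ∈ Γ.levels, (1 - lv⁻¹) * Γ.acceptedMass i di lv := by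
  rw [incentive, ← sum_mul_eq_sum_levels]
  congr 1
  exact sum_congr rfl fun x _ => by rw [p_u_eq]; ring

theorem muRE_mul_fRE (c : GrpI → ℝ) (i : GrpI) (x : (j : Fin N) → Xs j) :
    Γ.muRE c i x * Γ.fRE c i x = Γ.lam i * (Γ.G (c i) * Γ.p i x Cls.q) := by
  have := Γ.G_pos (c i); have := Γ.G_lt_one (c i)
  have := Γ.p_pos i x Cls.q; have := Γ.p_pos i x Cls.u
  have hden : 0 < Γ.G (c i) * Γ.p i x Cls.q + (1 - Γ.G (c i)) * Γ.p i x Cls.u := by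
    nlinarith
  rw [muRE, fRE]
  field_simp

theorem tp_eq_sum_levels (c : GrpI → ℝ) (d : GrpI → ((j : Fin N) → Xs j) → ℝ) (i : GrpI) :
    TP i d (Γ.muRE c) (Γ.fRE c) = ∑ lv ∈ Γ.levels, Γ.acceptedMass i (d i) lv := by
  have hlamG := (mul_pos (Γ.lam_pos i) (Γ.G_pos (c i))).ne'
  have hnum : ∀ x, d i x * Γ.muRE c i x * Γ.fRE c i x
      = Γ.lam i * Γ.G (c i) * (d i x * Γ.p i x Cls.q) := fun x => by
    rw [mul_assoc, muRE_mul_fRE]; ring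
  have hden : ∀ x, Γ.muRE c i x * Γ.fRE c i x = Γ.lam i * Γ.G (c i) * Γ.p i x Cls.q :=
    fun x => by rw [muRE_mul_fRE]; ring
  rw [TP, sum_congr rfl fun x _ => hnum x, sum_congr rfl fun x _ => hden x, ← mul_sum,
    ← mul_sum, sum_p, mul_one, mul_div_cancel_left₀ _ hlamG]
  simpa using Γ.sum_mul_eq_sum_levels i (d i) 1

def marginalGain (G₀ t : ℝ) : ℝ := G₀ * Γ.vq - (1 - G₀) * Γ.vu / t

theorem marginalGain_strictMonoOn {G₀ : ℝ} (hG₀ : G₀ < 1) :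
    StrictMonoOn (Γ.marginalGain G₀) (Set.Ioi 0) := fun s hs t _ hst => by
  have := div_lt_div_of_pos_left (mul_pos (sub_pos.2 hG₀) Γ.vu_pos) hs hst
  simp only [marginalGain]
  linarith

theorem uf_eq_sum_levels (c : GrpI → ℝ) (d : GrpI → ((j : Fin N) → Xs j) → ℝ) :
    Γ.UF d (Γ.muRE c) (Γ.fRE c) = ∑ i, Γ.lam i *
      ∑ lv ∈ Γ.levels, Γ.marginalGain (Γ.G (c i)) lv * Γ.acceptedMass i (d i) lv := by
  refine sum_congr rfl fun i _ => ?_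
  rw [← sum_mul_eq_sum_levels, mul_sum]
  refine sum_congr rfl fun x _ => ?_
  have hμ : Γ.muRE c i x = Γ.lam i * (Γ.G (c i) * Γ.p i x Cls.q
      + (1 - Γ.G (c i)) * Γ.p i x Cls.u) := rfl
  have hμf := Γ.muRE_mul_fRE c i x
  rw [p_u_eq] at hμ
  rw [marginalGain]
  linear_combination d i x * (Γ.vq + Γ.vu) * hμf - d i x * Γ.vu * hμ

theorem G_eq_of_c_eq {c : GrpI → ℝ} (hc : c GrpI.w = c GrpI.b) : ∀ i, Γ.G (c i) = Γ.G (c GrpI.w)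
  | .w => rfl
  | .b => by rw [hc]

variable {Γ} {c : GrpI → ℝ} {d : GrpI → ((j : Fin N) → Xs j) → ℝ} {i : GrpI} {ν : ℝ → ℝ}

theorem isPolicy_update_levelPolicy (hd : IsPolicy d)
    (hν : ∀ lv ∈ Γ.levels, ν lv ∈ Set.Icc 0 (Γ.levelMass lv)) :
    IsPolicy (Function.update d i (Γ.levelPolicy ν)) := by
  intro j x
  by_cases hj : j = i
  · subst hj
    simpa using Γ.levelPolicy_mem_Icc hν x
  · simpa [hj] using hd j x

theorem tp_update_levelPolicy
    (hsum : ∑ lv ∈ Γ.levels, ν lv = ∑ lv ∈ Γ.levels, Γ.acceptedMass i (d i) lv) (j : GrpI) :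
    TP j (Function.update d i (Γ.levelPolicy ν)) (Γ.muRE c) (Γ.fRE c)
      = TP j d (Γ.muRE c) (Γ.fRE c) := by
  rw [tp_eq_sum_levels, tp_eq_sum_levels]
  by_cases hj : j = i
  · subst hj
    rw [Function.update_self, ← hsum]
    exact sum_congr rfl fun lv hlv => Γ.acceptedMass_levelPolicy j ν hlv
  · rw [Function.update_of_ne hj]

theorem uf_update_levelPolicy :
    Γ.UF (Function.update d i (Γ.levelPolicy ν)) (Γ.muRE c) (Γ.fRE c)
        - Γ.UF d (Γ.muRE c) (Γ.fRE c)
      = Γ.lam i * (∑ lv ∈ Γ.levels, Γ.marginalGain (Γ.G (c i)) lv * ν lv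
        - ∑ lv ∈ Γ.levels, Γ.marginalGain (Γ.G (c i)) lv * Γ.acceptedMass i (d i) lv) := by
  rw [uf_eq_sum_levels, uf_eq_sum_levels, ← sum_sub_distrib,
    Fintype.sum_eq_single i fun j hj => by rw [Function.update_of_ne hj, sub_self],
    Function.update_self, ← mul_sub]
  congr 2
  exact sum_congr rfl fun lv hlv => by rw [Γ.acceptedMass_levelPolicy i ν hlv]

theorem sum_mul_le_of_uf_update_le
    (hle : Γ.UF (Function.update d i (Γ.levelPolicy ν)) (Γ.muRE c) (Γ.fRE c)
      ≤ Γ.UF d (Γ.muRE c) (Γ.fRE c)) :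
    ∑ lv ∈ Γ.levels, Γ.marginalGain (Γ.G (c i)) lv * ν lv
      ≤ ∑ lv ∈ Γ.levels, Γ.marginalGain (Γ.G (c i)) lv * Γ.acceptedMass i (d i) lv :=
  sub_nonpos.1 <| nonpos_of_mul_nonpos_right
    (uf_update_levelPolicy (d := d) ▸ sub_nonpos.2 hle) (Γ.lam_pos i)

theorem acceptedMass_eq_of_eo_optimal (hd : IsPolicy d)
    (hTP : TP GrpI.w d (Γ.muRE c) (Γ.fRE c) = TP GrpI.b d (Γ.muRE c) (Γ.fRE c))
    (hopt : ∀ d' ∈ EOset (Γ.muRE c) (Γ.fRE c),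
      Γ.UF d' (Γ.muRE c) (Γ.fRE c) ≤ Γ.UF d (Γ.muRE c) (Γ.fRE c)) :
    ∀ lv ∈ Γ.levels, Γ.acceptedMass GrpI.w (d GrpI.w) lv = Γ.acceptedMass GrpI.b (d GrpI.b) lv := by
  have hbox : ∀ i, ∀ lv ∈ Γ.levels,
      Γ.acceptedMass i (d i) lv ∈ Set.Icc 0 (Γ.levelMass lv) :=
    fun i lv _ => Γ.acceptedMass_mem_Icc (hd i) lv
  have htop : ∀ i, TopFilled Γ.levels Γ.levelMass (Γ.acceptedMass i (d i)) := fun i =>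
    topFilled_of_forall_sum_mul_le
      ((Γ.marginalGain_strictMonoOn (Γ.G_lt_one (c i))).mono Γ.levels_subset_Ioi) (hbox i)
      fun ν hν hsum => sum_mul_le_of_uf_update_le <| hopt _
        ⟨isPolicy_update_levelPolicy hd hν, by
          rw [tp_update_levelPolicy hsum, tp_update_levelPolicy hsum, hTP]⟩
  refine eqOn_of_topFilled (hbox _) (hbox _) (htop _) (htop _) ?_
  rw [← tp_eq_sum_levels, ← tp_eq_sum_levels, hTP]

theorem c_eq_of_acceptedMass_eq (hbr : Γ.BestResponds c d)
    (hA : ∀ lv ∈ Γ.levels,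
      Γ.acceptedMass GrpI.w (d GrpI.w) lv = Γ.acceptedMass GrpI.b (d GrpI.b) lv) :
    c GrpI.w = c GrpI.b := by
  rw [Γ.eq_incentive_of_bestResponds hbr, Γ.eq_incentive_of_bestResponds hbr,
    incentive_eq_sum_levels, incentive_eq_sum_levels,
    sum_congr rfl fun lv hlv => by rw [hA lv hlv]]

theorem forall_uf_le_of_eo_optimal (hc : c GrpI.w = c GrpI.b)
    (hopt : ∀ d' ∈ EOset (Γ.muRE c) (Γ.fRE c),
      Γ.UF d' (Γ.muRE c) (Γ.fRE c) ≤ Γ.UF d (Γ.muRE c) (Γ.fRE c))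
    (d' : GrpI → ((j : Fin N) → Xs j) → ℝ) (hd' : IsPolicy d') :
    Γ.UF d' (Γ.muRE c) (Γ.fRE c) ≤ Γ.UF d (Γ.muRE c) (Γ.fRE c) := by
  set gain := Γ.marginalGain (Γ.G (c GrpI.w))
  set νmax : ℝ → ℝ := fun lv => if 0 ≤ gain lv then Γ.levelMass lv else 0
  have hνmax : ∀ lv ∈ Γ.levels, νmax lv ∈ Set.Icc 0 (Γ.levelMass lv) := fun lv hlv => by
    have := (Γ.levelMass_pos hlv).le
    simp only [νmax]
    split_ifs <;> simp [this]
  -- the firm's unconstrained optimum treats both groups alike, so it is an EO policy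
  let dmax : GrpI → ((j : Fin N) → Xs j) → ℝ := fun _ => Γ.levelPolicy νmax
  have hA : ∀ i, ∀ lv ∈ Γ.levels, Γ.acceptedMass i (dmax i) lv = νmax lv :=
    fun i _ hlv => Γ.acceptedMass_levelPolicy i νmax hlv
  have hdmax : dmax ∈ EOset (Γ.muRE c) (Γ.fRE c) :=
    ⟨fun _ => Γ.levelPolicy_mem_Icc hνmax, by
      rw [tp_eq_sum_levels, tp_eq_sum_levels, sum_congr rfl (hA _), sum_congr rfl (hA _)]⟩
  refine le_trans ?_ (hopt dmax hdmax)
  rw [uf_eq_sum_levels, uf_eq_sum_levels]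
  refine sum_le_sum fun i _ => mul_le_mul_of_nonneg_left ?_ (Γ.lam_pos i).le
  rw [Γ.G_eq_of_c_eq hc i]
  exact (sum_mul_le_sum_mul_ite fun lv _ => Γ.acceptedMass_mem_Icc (hd' i) lv).trans_eq
    (sum_congr rfl fun lv hlv => by rw [hA i lv hlv])

theorem acceptedMass_eq_of_marginalGain_ne_zero (hd : IsPolicy d)
    (hopt : ∀ d', IsPolicy d' → Γ.UF d' (Γ.muRE c) (Γ.fRE c) ≤ Γ.UF d (Γ.muRE c) (Γ.fRE c))
    (hc : c GrpI.w = c GrpI.b) {lv : ℝ} (hlv : lv ∈ Γ.levels)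
    (hne : Γ.marginalGain (Γ.G (c GrpI.w)) lv ≠ 0) :
    Γ.acceptedMass GrpI.w (d GrpI.w) lv = Γ.acceptedMass GrpI.b (d GrpI.b) lv := by
  have hbang : ∀ i, (0 < Γ.marginalGain (Γ.G (c GrpI.w)) lv →
        Γ.acceptedMass i (d i) lv = Γ.levelMass lv) ∧
      (Γ.marginalGain (Γ.G (c GrpI.w)) lv < 0 → Γ.acceptedMass i (d i) lv = 0) := fun i =>
    eq_endpoint_of_forall_sum_mul_le (fun lv _ => Γ.acceptedMass_mem_Icc (hd i) lv)
      (fun ν hν => by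
        rw [← Γ.G_eq_of_c_eq hc i]
        exact sum_mul_le_of_uf_update_le (hopt _ (isPolicy_update_levelPolicy hd hν))) hlv
  rcases hne.lt_or_gt with hneg | hpos
  · rw [(hbang _).2 hneg, (hbang _).2 hneg]
  · rw [(hbang _).1 hpos, (hbang _).1 hpos]

theorem acceptedMass_eq_of_isEquilibrium (hone : Γ.OneNotLV) (hd : IsPolicy d)
    (hbr : Γ.BestResponds c d)
    (hopt : ∀ d', IsPolicy d' → Γ.UF d' (Γ.muRE c) (Γ.fRE c) ≤ Γ.UF d (Γ.muRE c) (Γ.fRE c))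
    (hc : c GrpI.w = c GrpI.b) (lv : ℝ) (hlv : lv ∈ Γ.levels) :
    Γ.acceptedMass GrpI.w (d GrpI.w) lv = Γ.acceptedMass GrpI.b (d GrpI.b) lv := by
  rcases ne_or_eq (Γ.marginalGain (Γ.G (c GrpI.w)) lv) 0 with hne | hzero
  · exact acceptedMass_eq_of_marginalGain_ne_zero hd hopt hc hlv hne
  -- at the firm's indifference level the groups are equalised by the applicants' incentives
  have hinj := ((Γ.marginalGain_strictMonoOn (Γ.G_lt_one (c GrpI.w))).mono
    Γ.levels_subset_Ioi).injOn
  have hinc : ∑ t ∈ Γ.levels, (1 - t⁻¹) *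
      (Γ.acceptedMass GrpI.w (d GrpI.w) t - Γ.acceptedMass GrpI.b (d GrpI.b) t) = 0 := by
    have := hc
    rw [Γ.eq_incentive_of_bestResponds hbr, Γ.eq_incentive_of_bestResponds hbr,
      incentive_eq_sum_levels, incentive_eq_sum_levels] at this
    simp only [mul_sub, sum_sub_distrib]
    exact sub_eq_zero.2 (mul_left_cancel₀ Γ.om_pos.ne' this)
  rw [sum_eq_single lv (fun t ht htlv => by
      rw [acceptedMass_eq_of_marginalGain_ne_zero hd hopt hc ht
        fun h0 => htlv (hinj ht hlv (h0.trans hzero.symm)), sub_self, mul_zero])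
    fun hlv' => absurd hlv hlv'] at hinc
  have hlv1 : lv ≠ 1 := by
    obtain ⟨x, -, rfl⟩ := mem_image.1 hlv
    exact fun h1 => hone ⟨x, h1⟩
  refine sub_eq_zero.1 ((mul_eq_zero.1 hinc).resolve_left fun h1 => hlv1 ?_)
  rwa [sub_eq_zero, eq_comm, inv_eq_one] at h1

end Game

/-- **Theorem 1 (property 2).** The set of equal opportunity-controlled
equilibria coincides with the set of non-discriminatory equilibria. -/
theorem equal_opportunity_steady_states
    {N : ℕ} {Xs : Fin N → Type} [∀ j, Fintype (Xs j)] [∀ j, Nonempty (Xs j)]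
    (Γ : Game N Xs) (hone : Γ.OneNotLV)
    (c : GrpI → ℝ) (d : GrpI → ((j : Fin N) → Xs j) → ℝ) :
    Γ.IsControlledEq (fun μ f => EOset μ f) c d ↔
      Γ.IsEquilibrium c d ∧ c GrpI.w = c GrpI.b := by
  constructor
  · rintro ⟨⟨hd, hTP⟩, hbr, hopt⟩
    have hc := Game.c_eq_of_acceptedMass_eq hbr (Game.acceptedMass_eq_of_eo_optimal hd hTP hopt)
    exact ⟨⟨hd, hbr, Game.forall_uf_le_of_eo_optimal hc hopt⟩, hc⟩
  · rintro ⟨⟨hd, hbr, hopt⟩, hc⟩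
    have hA := Game.acceptedMass_eq_of_isEquilibrium hone hd hbr hopt hc
    refine ⟨⟨hd, ?_⟩, hbr, fun d' hd' => hopt d' hd'.1⟩
    rw [Game.tp_eq_sum_levels, Game.tp_eq_sum_levels, Finset.sum_congr rfl hA]
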